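/- arXiv:2502.15166 — 2 statements merged into one kernel-verified Lean document; each statement's English description precedes it below -/
import Mathlib

section
/- Let P be an n-dimensional box poset and Q an m-dimensional box poset of the same rank with m <= n - 2. Then the diamond product of P and Q is not Macaulay. -/
open Finset

instance {α : Type*} [Fintype α] : Fintype (WithBot α) := inferInstanceAs (Fintype (Option α))
instance {α : Type*} [Fintype α] : Fintype (WithTop α) := inferInstanceAs (Fintype (Option α))

variable {α : Type*}

open Classical in
noncomputable def shadow [PartialOrder α] [Fintype α] (A : Finset α) : Finset α :=
  Finset.univ.filter (fun b => ∃ a ∈ A, a ⋖ b)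

def IsRankFn [PartialOrder α] (rank : α → ℕ) : Prop :=
  (∃ x, rank x = 0 ∧ ∀ y, x ≤ y) ∧ ∀ a b : α, a ⋖ b → rank b = rank a + 1

def IsInitSeg [PartialOrder α] (rank : α → ℕ) (lt : α → α → Prop) (d : ℕ)
    (S : Finset α) : Prop :=
  (∀ x ∈ S, rank x = d) ∧ ∀ a ∈ S, ∀ b, rank b = d → lt a b → b ∈ S

def MacaulayWith [PartialOrder α] [Fintype α] (rank : α → ℕ)
    (lt : α → α → Prop) : Prop :=
  IsTrichotomous α lt ∧ IsTrans α lt ∧ IsIrrefl α lt ∧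
  (∀ d (A S : Finset α), (∀ x ∈ A, rank x = d) → IsInitSeg rank lt d S →
    S.card = A.card → (shadow S).card ≤ (shadow A).card) ∧
  (∀ d (S : Finset α), IsInitSeg rank lt d S → IsInitSeg rank lt (d + 1) (shadow S))

def IsMacaulay [PartialOrder α] [Fintype α] (rank : α → ℕ) : Prop :=
  ∃ lt : α → α → Prop, MacaulayWith rank lt

abbrev Wedge (P Q : Type*) [PartialOrder P] [PartialOrder Q] [OrderBot P] [OrderBot Q] :=
  WithBot ({p : P // p ≠ ⊥} ⊕ {q : Q // q ≠ ⊥})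

def wedgeRank {P Q : Type*} [PartialOrder P] [PartialOrder Q] [OrderBot P] [OrderBot Q]
    (rP : P → ℕ) (rQ : Q → ℕ) : Wedge P Q → ℕ :=
  WithBot.recBotCoe 0 (Sum.elim (fun p => rP p.1) (fun q => rQ q.1))

open Classical in
noncomputable def wedgeInl {P Q : Type*} [PartialOrder P] [PartialOrder Q] [OrderBot P]
    [OrderBot Q] (p : P) : Wedge P Q :=
  if h : p = ⊥ then ⊥ else
    ((Sum.inl ⟨p, h⟩ : {p : P // p ≠ ⊥} ⊕ {q : Q // q ≠ ⊥}) : Wedge P Q)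

open Classical in
noncomputable def wedgeInr {P Q : Type*} [PartialOrder P] [PartialOrder Q] [OrderBot P]
    [OrderBot Q] (q : Q) : Wedge P Q :=
  if h : q = ⊥ then ⊥ else
    ((Sum.inr ⟨q, h⟩ : {p : P // p ≠ ⊥} ⊕ {q : Q // q ≠ ⊥}) : Wedge P Q)

abbrev Diamond (P Q : Type*) [PartialOrder P] [PartialOrder Q] [OrderBot P] [OrderBot Q]
    [OrderTop P] [OrderTop Q] :=
  WithBot (WithTop ({p : P // p ≠ ⊥ ∧ p ≠ ⊤} ⊕ {q : Q // q ≠ ⊥ ∧ q ≠ ⊤}))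

def diamondRank {P Q : Type*} [PartialOrder P] [PartialOrder Q] [OrderBot P] [OrderBot Q]
    [OrderTop P] [OrderTop Q] (rP : P → ℕ) (rQ : Q → ℕ) (s : ℕ) : Diamond P Q → ℕ :=
  WithBot.recBotCoe 0 (WithTop.recTopCoe s (Sum.elim (fun p => rP p.1) (fun q => rQ q.1)))

def diamondInl {P Q : Type*} [PartialOrder P] [PartialOrder Q] [OrderBot P] [OrderBot Q]
    [OrderTop P] [OrderTop Q] (p : {p : P // p ≠ ⊥ ∧ p ≠ ⊤}) : Diamond P Q :=
  (((Sum.inl p : {p : P // p ≠ ⊥ ∧ p ≠ ⊤} ⊕ {q : Q // q ≠ ⊥ ∧ q ≠ ⊤}) :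
    WithTop ({p : P // p ≠ ⊥ ∧ p ≠ ⊤} ⊕ {q : Q // q ≠ ⊥ ∧ q ≠ ⊤})) : Diamond P Q)

abbrev Box (a b : ℕ) := Fin a × Fin b

def boxRank {a b : ℕ} : Box a b → ℕ := fun p => p.1.val + p.2.val

abbrev BoxF {n : ℕ} (d : Fin n → ℕ) := ∀ i, Fin (d i + 1)

def boxFRank {n : ℕ} {d : Fin n → ℕ} : BoxF d → ℕ := fun x => ∑ i, (x i).val

def diamondInr {P Q : Type*} [PartialOrder P] [PartialOrder Q] [OrderBot P] [OrderBot Q]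
    [OrderTop P] [OrderTop Q] (q : {q : Q // q ≠ ⊥ ∧ q ≠ ⊤}) : Diamond P Q :=
  (((Sum.inr q : {p : P // p ≠ ⊥ ∧ p ≠ ⊤} ⊕ {q : Q // q ≠ ⊥ ∧ q ≠ ⊤}) :
    WithTop ({p : P // p ≠ ⊥ ∧ p ≠ ⊤} ⊕ {q : Q // q ≠ ⊥ ∧ q ≠ ⊤})) : Diamond P Q)

abbrev WedgeFam {ι : Type*} (P : ι → Type*) [∀ i, PartialOrder (P i)]
    [∀ i, OrderBot (P i)] :=
  WithBot (Σ i, {p : P i // p ≠ ⊥})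

def wedgeFamRank {ι : Type*} {P : ι → Type*} [∀ i, PartialOrder (P i)]
    [∀ i, OrderBot (P i)] (rank : ∀ i, P i → ℕ) : WedgeFam P → ℕ :=
  WithBot.recBotCoe 0 (fun s => rank s.1 s.2.1)

abbrev DiamondFam {ι : Type*} (P : ι → Type*) [∀ i, PartialOrder (P i)]
    [∀ i, OrderBot (P i)] [∀ i, OrderTop (P i)] :=
  WithBot (WithTop (Σ i, {p : P i // p ≠ ⊥ ∧ p ≠ ⊤}))

def diamondFamRank {ι : Type*} {P : ι → Type*} [∀ i, PartialOrder (P i)]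
    [∀ i, OrderBot (P i)] [∀ i, OrderTop (P i)] (rank : ∀ i, P i → ℕ) (s : ℕ) :
    DiamondFam P → ℕ :=
  WithBot.recBotCoe 0 (WithTop.recTopCoe s (fun x => rank x.1 x.2.1))

/-!
Suppose an order `lt` witnessed that the diamond `D` of the boxes `P = ∏ [0, dᵢ]` (`n` factors)
and `Q = ∏ [0, eⱼ]` (`m` factors) of common rank `S` is Macaulay.

On level one, the `m` atoms of `Q` span at most `C(m,2) + m` elements of rank two, whereas any
other `m` atoms, `a ≥ 1` of them in `P`, span at least `C(m,2) + a (n - a) > C(m,2) + m` of them,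
because `n ≥ m + 2`. So the atoms of `Q` form an initial segment; as shadows of initial segments
are initial segments, so does every level of `Q`, in particular its level `L` of rank `S - 2`.

Let `λ` be the number of `i` with `dᵢ ≥ 2`. The initial segment of level `S - 2` of size
`#L + 2 + min 2 λ` is `L` together with `2 + min 2 λ` elements of `P`, so its shadow contains the
`m` coatoms of `Q` and at least three coatoms of `P`. But `#L ≤ C(m,2) + m`, while the elements of
`P` of rank `S - 2` lying only below the coatoms indexed by a set `C` of `m + 2` coordinates number
`C(m+2,2)` plus the number of `i ∈ C` with `dᵢ ≥ 2`; choosing `C` well, this many of them have a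
shadow of only `m + 2` elements, contradicting the minimality of initial segments.
-/

theorem Nat.choose_two_add (a b : ℕ) : (a + b).choose 2 = a.choose 2 + b.choose 2 + a * b := by
  induction b with
  | zero => simp
  | succ b ih =>
    rw [← add_assoc, Nat.choose_succ_succ', ih, Nat.choose_succ_succ' b, Nat.choose_one_right,
      Nat.choose_one_right]
    ring

theorem Nat.choose_two_sub_add_choose_two_add_lt {n m a : ℕ} (ha : 1 ≤ a) (ham : a ≤ m)
    (hmn : m + 2 ≤ n) : (n - a).choose 2 + a.choose 2 + m < n.choose 2 := by
  obtain ⟨c, rfl⟩ : ∃ c, n = c + a := ⟨n - a, by omega⟩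
  rw [Nat.add_sub_cancel, Nat.choose_two_add]
  nlinarith

theorem Fin.le_sum_of_one_le {k : ℕ} {f : Fin k → ℕ} (hf : ∀ i, 1 ≤ f i) : k ≤ ∑ i, f i := by
  simpa using card_nsmul_le_sum univ f 1 fun i _ => hf i

theorem Fin.covBy_iff_val_add_one_eq {n : ℕ} {a b : Fin n} : a ⋖ b ↔ (a : ℕ) + 1 = b := by
  refine ⟨fun h => ?_, fun h => ⟨Fin.lt_def.2 (by omega), fun c hac hcb => ?_⟩⟩
  · by_contra hne
    have hab := Fin.lt_def.1 h.lt
    exact h.2 (c := ⟨a + 1, by omega⟩) (Fin.lt_def.2 (by simp)) (Fin.lt_def.2 (by simp; omega))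
  · rw [Fin.lt_def] at hac hcb; omega

/-! ### Shadows and initial segments -/

section Shadow

variable [PartialOrder α] [Fintype α]

theorem mem_shadow {A : Finset α} {b : α} : b ∈ shadow A ↔ ∃ a ∈ A, a ⋖ b := by
  simp [_root_.shadow]

theorem shadow_union [DecidableEq α] (A B : Finset α) :
    shadow (A ∪ B) = shadow A ∪ shadow B := by
  ext b
  simp only [mem_union, mem_shadow, or_and_right, exists_or]

theorem shadow_mono {A B : Finset α} (h : A ⊆ B) : shadow A ⊆ shadow B := fun _ hb =>
  let ⟨a, ha, hab⟩ := mem_shadow.1 hb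
  mem_shadow.2 ⟨a, h ha, hab⟩

end Shadow

section InitSeg

open Classical in
noncomputable def level [Fintype α] (rank : α → ℕ) (t : ℕ) : Finset α := {x | rank x = t}

@[simp] theorem mem_level [Fintype α] {rank : α → ℕ} {t : ℕ} {x : α} :
    x ∈ level rank t ↔ rank x = t := by
  simp [level]

variable [PartialOrder α] {rank : α → ℕ} {lt : α → α → Prop} {d : ℕ} {S T : Finset α}

theorem IsInitSeg.subset_level [Fintype α] (hS : IsInitSeg rank lt d S) : S ⊆ level rank d :=
  fun x hx => mem_level.2 (hS.1 x hx)

theorem exists_isInitSeg [Fintype α] [IsStrictOrder α lt] {k : ℕ} (hk : k ≤ #(level rank d)) :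
    ∃ S, IsInitSeg rank lt d S ∧ #S = k := by
  classical
  induction k with
  | zero => exact ⟨∅, ⟨by simp, by simp⟩, rfl⟩
  | succ k ih =>
    obtain ⟨S, hS, rfl⟩ := ih (by omega)
    have hne : (level rank d \ S).Nonempty := by
      rw [← card_pos, card_sdiff_of_subset hS.subset_level]; omega
    -- add an `lt`-maximal element of the rest of the level
    obtain ⟨x, hx, hxmax⟩ := (Finite.wellFounded_of_trans_of_irrefl (Function.swap lt)).has_min
      _ (coe_nonempty.2 hne)
    simp only [mem_coe, mem_sdiff, mem_level] at hx hxmax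
    refine ⟨insert x S, ⟨?_, ?_⟩, card_insert_of_notMem hx.2⟩
    · simpa [hx.1] using hS.1
    · intro a ha b hb hab
      rcases mem_insert.1 ha with rfl | ha
      · by_contra hbS
        exact hxmax b ⟨hb, fun h => hbS (mem_insert_of_mem h)⟩ hab
      · exact mem_insert_of_mem (hS.2 a ha b hb hab)

theorem IsInitSeg.subset_of_card_le [IsStrictTotalOrder α lt] (hS : IsInitSeg rank lt d S)
    (hT : IsInitSeg rank lt d T) (hST : #S ≤ #T) : S ⊆ T := by
  classical
  intro x hxS
  by_contra hxT
  have hTS : T ⊆ S.erase x := fun y hyT => by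
    rcases trichotomous_of lt y x with hyx | rfl | hxy
    · exact absurd (hT.2 y hyT x (hS.1 x hxS) hyx) hxT
    · exact absurd hyT hxT
    · exact mem_erase.2 ⟨fun h => hxT (h ▸ hyT), hS.2 x hxS y (hT.1 y hyT) hxy⟩
  have := card_le_card hTS
  rw [card_erase_of_mem hxS] at this
  have := card_pos.2 ⟨x, hxS⟩
  omega

theorem MacaulayWith.isStrictTotalOrder [Fintype α] (h : MacaulayWith rank lt) :
    IsStrictTotalOrder α lt :=
  have := h.1; have := h.2.1; have := h.2.2.1; {}

theorem MacaulayWith.card_shadow_le [Fintype α] (h : MacaulayWith rank lt) {A : Finset α}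
    (hA : A ⊆ level rank d) (hS : IsInitSeg rank lt d S) (hSA : #S = #A) :
    #(shadow S) ≤ #(shadow A) :=
  h.2.2.2.1 d A S (fun _ hx => mem_level.1 (hA hx)) hS hSA

theorem MacaulayWith.isInitSeg_shadow [Fintype α] (h : MacaulayWith rank lt)
    (hS : IsInitSeg rank lt d S) : IsInitSeg rank lt (d + 1) (shadow S) :=
  h.2.2.2.2 d S hS

theorem MacaulayWith.isInitSeg_of_forall_card_shadow_lt [Fintype α] (h : MacaulayWith rank lt)
    {A : Finset α} (hA : A ⊆ level rank d)
    (hmin : ∀ B ⊆ level rank d, #B = #A → B ≠ A → #(shadow A) < #(shadow B)) :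
    IsInitSeg rank lt d A := by
  have := h.isStrictTotalOrder
  obtain ⟨S, hS, hSA⟩ := exists_isInitSeg (lt := lt) (card_le_card hA)
  obtain rfl | hne := eq_or_ne S A
  · exact hS
  · exact absurd (hmin S hS.subset_level hSA hne) (not_lt.2 (h.card_shadow_le hA hS hSA))

end InitSeg

/-! ### The diamond product -/

namespace Diamond

variable {P Q : Type*} [PartialOrder P] [OrderBot P] [OrderTop P]
  [PartialOrder Q] [OrderBot Q] [OrderTop Q]

open Classical in
noncomputable def inl (p : P) : Diamond P Q :=
  if h : p = ⊥ then ⊥ else if h' : p = ⊤ then ⊤ else diamondInl ⟨p, h, h'⟩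

open Classical in
noncomputable def inr (q : Q) : Diamond P Q :=
  if h : q = ⊥ then ⊥ else if h' : q = ⊤ then ⊤ else diamondInr ⟨q, h, h'⟩

@[simp] theorem inl_bot : (inl ⊥ : Diamond P Q) = ⊥ := by simp [inl]

theorem inl_top (h : (⊥ : P) ≠ ⊤) : (inl ⊤ : Diamond P Q) = ⊤ := by simp [inl, h.symm]

theorem inr_top (h : (⊥ : Q) ≠ ⊤) : (inr ⊤ : Diamond P Q) = ⊤ := by simp [inr, h.symm]

theorem inl_le_inl_iff {p p' : P} : (inl p : Diamond P Q) ≤ inl p' ↔ p ≤ p' := by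
  unfold inl diamondInl
  split_ifs <;> simp_all

theorem inr_le_inr_iff {q q' : Q} : (inr q : Diamond P Q) ≤ inr q' ↔ q ≤ q' := by
  unfold inr diamondInr
  split_ifs <;> simp_all

theorem inl_eq_bot_iff {p : P} : (inl p : Diamond P Q) = ⊥ ↔ p = ⊥ := by
  unfold inl diamondInl
  split_ifs <;> simp_all

theorem inr_eq_bot_iff {q : Q} : (inr q : Diamond P Q) = ⊥ ↔ q = ⊥ := by
  unfold inr diamondInr
  split_ifs <;> simp_all

theorem exists_inl_eq_of_inl_le {p : P} (hp : p ≠ ⊥) {y : Diamond P Q} (h : inl p ≤ y) :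
    ∃ p', inl p' = y := by
  induction y using WithBot.recBotCoe with
  | bot => exact absurd (inl_eq_bot_iff.1 (le_bot_iff.1 h)) hp
  | coe y =>
    induction y using WithTop.recTopCoe with
    | top => exact ⟨⊤, inl_top (hp.bot_lt.trans_le le_top).ne⟩
    | coe y =>
      rcases y with ⟨p', hp'⟩ | ⟨q, hq⟩
      · exact ⟨p', by simp [inl, hp'.1, hp'.2, diamondInl]⟩
      · unfold inl diamondInl at h
        split_ifs at h <;> simp_all

theorem inl_ne_inr {p : P} (h1 : p ≠ ⊥) (h2 : p ≠ ⊤) (q : Q) : (inl p : Diamond P Q) ≠ inr q := by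
  unfold inl inr diamondInl diamondInr
  split_ifs <;> simp_all

theorem exists_inl_eq_or_exists_inr_eq (hP : (⊥ : P) ≠ ⊤) (x : Diamond P Q) :
    (∃ p, inl p = x) ∨ ∃ q, inr q = x := by
  induction x using WithBot.recBotCoe with
  | bot => exact Or.inl ⟨⊥, inl_bot⟩
  | coe x =>
    induction x using WithTop.recTopCoe with
    | top => exact Or.inl ⟨⊤, inl_top hP⟩
    | coe x =>
      rcases x with ⟨p, hp⟩ | ⟨q, hq⟩
      · exact Or.inl ⟨p, by simp [inl, hp.1, hp.2, diamondInl]⟩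
      · exact Or.inr ⟨q, by simp [inr, hq.1, hq.2, diamondInr]⟩

theorem exists_inr_eq_of_inr_le {q : Q} (hq : q ≠ ⊥) {y : Diamond P Q} (h : inr q ≤ y) :
    ∃ q', inr q' = y := by
  induction y using WithBot.recBotCoe with
  | bot => exact absurd (inr_eq_bot_iff.1 (le_bot_iff.1 h)) hq
  | coe y =>
    induction y using WithTop.recTopCoe with
    | top => exact ⟨⊤, inr_top (hq.bot_lt.trans_le le_top).ne⟩
    | coe y =>
      rcases y with ⟨p, hp⟩ | ⟨q', hq'⟩
      · unfold inr diamondInr at h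
        split_ifs at h <;> simp_all
      · exact ⟨q', by simp [inr, hq'.1, hq'.2, diamondInr]⟩

noncomputable def inlEmb : P ↪o Diamond P Q :=
  OrderEmbedding.ofMapLEIff inl fun _ _ => inl_le_inl_iff

noncomputable def inrEmb : Q ↪o Diamond P Q :=
  OrderEmbedding.ofMapLEIff inr fun _ _ => inr_le_inr_iff

@[simp] theorem inlEmb_apply (p : P) : (inlEmb p : Diamond P Q) = inl p := rfl

@[simp] theorem inrEmb_apply (q : Q) : (inrEmb q : Diamond P Q) = inr q := rfl

theorem inl_covBy_iff {p : P} (hp : p ≠ ⊥) {y : Diamond P Q} :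
    inl p ⋖ y ↔ ∃ p', p ⋖ p' ∧ inl p' = y := by
  constructor
  · intro h
    obtain ⟨p', rfl⟩ := exists_inl_eq_of_inl_le hp h.le
    exact ⟨p', CovBy.of_image inlEmb h, rfl⟩
  · rintro ⟨p', hpp', rfl⟩
    refine ⟨inlEmb.strictMono hpp'.lt, fun c hpc hcp' => ?_⟩
    obtain ⟨c, rfl⟩ := exists_inl_eq_of_inl_le hp hpc.le
    exact hpp'.2 (inlEmb.lt_iff_lt.1 hpc) (inlEmb.lt_iff_lt.1 hcp')

theorem inr_covBy_iff {q : Q} (hq : q ≠ ⊥) {y : Diamond P Q} :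
    inr q ⋖ y ↔ ∃ q', q ⋖ q' ∧ inr q' = y := by
  constructor
  · intro h
    obtain ⟨q', rfl⟩ := exists_inr_eq_of_inr_le hq h.le
    exact ⟨q', CovBy.of_image inrEmb h, rfl⟩
  · rintro ⟨q', hqq', rfl⟩
    refine ⟨inrEmb.strictMono hqq'.lt, fun c hqc hcq' => ?_⟩
    obtain ⟨c, rfl⟩ := exists_inr_eq_of_inr_le hq hqc.le
    exact hqq'.2 (inrEmb.lt_iff_lt.1 hqc) (inrEmb.lt_iff_lt.1 hcq')

theorem diamondRank_inl {rP : P → ℕ} {rQ : Q → ℕ} {s : ℕ} (h0 : rP ⊥ = 0) (hs : rP ⊤ = s)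
    (p : P) : diamondRank rP rQ s (inl p) = rP p := by
  unfold inl diamondInl
  split_ifs with h1 h2
  · rw [h1, h0]; rfl
  · rw [h2, hs]; rfl
  · rfl

theorem diamondRank_inr {rP : P → ℕ} {rQ : Q → ℕ} {s : ℕ} (h0 : rQ ⊥ = 0) (hs : rQ ⊤ = s)
    (q : Q) : diamondRank rP rQ s (inr q) = rQ q := by
  unfold inr diamondInr
  split_ifs with h1 h2
  · rw [h1, h0]; rfl
  · rw [h2, hs]; rfl
  · rfl

theorem disjoint_map_inl_map_inr {A : Finset P} (hA : ∀ p ∈ A, p ≠ ⊥ ∧ p ≠ ⊤) (B : Finset Q) :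
    Disjoint (A.map inlEmb.toEmbedding) (B.map (inrEmb (P := P)).toEmbedding) := by
  simp only [disjoint_left, mem_map, RelEmbedding.coe_toEmbedding, inlEmb_apply, inrEmb_apply]
  rintro _ ⟨p, hp, rfl⟩ ⟨q, -, hq⟩
  exact inl_ne_inr (hA p hp).1 (hA p hp).2 q hq.symm

theorem shadow_map_inl [Fintype P] [Fintype (Diamond P Q)] {A : Finset P} (hA : ⊥ ∉ A) :
    _root_.shadow (A.map inlEmb.toEmbedding) = (shadow A).map (inlEmb (Q := Q)).toEmbedding := by
  ext y
  simp only [mem_shadow, mem_map, RelEmbedding.coe_toEmbedding, inlEmb_apply]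
  constructor
  · rintro ⟨_, ⟨p, hp, rfl⟩, hpy⟩
    obtain ⟨p', hpp', rfl⟩ := (inl_covBy_iff (ne_of_mem_of_not_mem hp hA)).1 hpy
    exact ⟨p', ⟨p, hp, hpp'⟩, rfl⟩
  · rintro ⟨p', ⟨p, hp, hpp'⟩, rfl⟩
    exact ⟨inl p, ⟨p, hp, rfl⟩, (inl_covBy_iff (ne_of_mem_of_not_mem hp hA)).2 ⟨p', hpp', rfl⟩⟩

theorem shadow_map_inr [Fintype Q] [Fintype (Diamond P Q)] {B : Finset Q} (hB : ⊥ ∉ B) :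
    _root_.shadow (B.map inrEmb.toEmbedding) = (shadow B).map (inrEmb (P := P)).toEmbedding := by
  ext y
  simp only [mem_shadow, mem_map, RelEmbedding.coe_toEmbedding, inrEmb_apply]
  constructor
  · rintro ⟨_, ⟨q, hq, rfl⟩, hqy⟩
    obtain ⟨q', hqq', rfl⟩ := (inr_covBy_iff (ne_of_mem_of_not_mem hq hB)).1 hqy
    exact ⟨q', ⟨q, hq, hqq'⟩, rfl⟩
  · rintro ⟨q', ⟨q, hq, hqq'⟩, rfl⟩
    exact ⟨inr q, ⟨q, hq, rfl⟩, (inr_covBy_iff (ne_of_mem_of_not_mem hq hB)).2 ⟨q', hqq', rfl⟩⟩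

theorem eq_map_inl_union_map_inr [Fintype P] [Fintype Q] [DecidableEq (Diamond P Q)]
    (hP : (⊥ : P) ≠ ⊤) (X : Finset (Diamond P Q)) :
    X = ({p | inl p ∈ X} : Finset P).map inlEmb.toEmbedding ∪
      ({q | inr q ∈ X} : Finset Q).map inrEmb.toEmbedding := by
  ext x
  simp only [mem_union, mem_map, mem_filter, mem_univ, true_and, RelEmbedding.coe_toEmbedding,
    inlEmb_apply, inrEmb_apply]
  constructor
  · intro hx
    rcases exists_inl_eq_or_exists_inr_eq hP x with ⟨p, rfl⟩ | ⟨q, rfl⟩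
    exacts [Or.inl ⟨p, hx, rfl⟩, Or.inr ⟨q, hx, rfl⟩]
  · rintro (⟨p, hp, rfl⟩ | ⟨q, hq, rfl⟩) <;> assumption

end Diamond

/-! ### Boxes -/

namespace BoxF

variable {k : ℕ} {f : Fin k → ℕ} {x y z : BoxF f} {i j : Fin k}

theorem boxFRank_bot : boxFRank (⊥ : BoxF f) = 0 := by simp [boxFRank, bot_eq_zero]

theorem boxFRank_top : boxFRank (⊤ : BoxF f) = ∑ i, f i := rfl

theorem bot_ne_top (h : 0 < ∑ i, f i) : (⊥ : BoxF f) ≠ ⊤ := fun h' => by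
  have := congrArg boxFRank h'
  rw [boxFRank_bot, boxFRank_top] at this
  omega

theorem bot_notMem_level {t : ℕ} (ht : t ≠ 0) : (⊥ : BoxF f) ∉ level boxFRank t := by
  rw [mem_level, boxFRank_bot]; exact ht.symm

theorem ne_bot_and_ne_top_of_mem_level {t : ℕ} {x : BoxF f} (h0 : t ≠ 0) (hS : t ≠ ∑ i, f i)
    (hx : x ∈ level boxFRank t) : x ≠ ⊥ ∧ x ≠ ⊤ := by
  rw [mem_level] at hx
  exact ⟨by rintro rfl; rw [boxFRank_bot] at hx; omega, by rintro rfl; exact hS (hx ▸ rfl)⟩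

theorem boxFRank_lt_boxFRank (h : x < y) : boxFRank x < boxFRank y :=
  let ⟨hle, i, hi⟩ := Pi.lt_def.1 h
  sum_lt_sum (fun j _ => Fin.le_def.1 (hle j)) ⟨i, mem_univ i, Fin.lt_def.1 hi⟩

theorem covBy_iff : x ⋖ y ↔ x ≤ y ∧ boxFRank y = boxFRank x + 1 := by
  classical
  constructor
  · intro h
    obtain ⟨i, hi, hne⟩ := Pi.covBy_iff.1 h
    refine ⟨h.le, ?_⟩
    have hval : ∀ j, (y j : ℕ) = x j + if j = i then 1 else 0 := fun j => by
      by_cases hj : j = i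
      · subst hj; simp [← Fin.covBy_iff_val_add_one_eq.1 hi]
      · simp [hj, hne j hj]
    simp [boxFRank, hval, sum_add_distrib]
  · rintro ⟨hle, hr⟩
    refine ⟨hle.lt_of_ne (by rintro rfl; omega), fun z hxz hzy => ?_⟩
    have := boxFRank_lt_boxFRank hxz
    have := boxFRank_lt_boxFRank hzy
    omega

theorem exists_covBy (hy : y ≠ ⊥) : ∃ x, x ⋖ y := by
  classical
  obtain ⟨i, hi⟩ : ∃ i, y i ≠ ⊥ := by
    by_contra! h
    exact hy (funext h)
  exact ⟨_, Pi.covBy_iff_exists_left_eq.2 ⟨i, _, Order.pred_covBy_of_not_isMin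
    (by rwa [isMin_iff_eq_bot]), rfl⟩⟩

theorem shadow_level (t : ℕ) :
    shadow (level boxFRank t) = level (boxFRank (d := f)) (t + 1) := by
  ext y
  simp only [mem_shadow, mem_level, covBy_iff]
  constructor
  · rintro ⟨x, rfl, -, hy⟩
    exact hy
  · intro hy
    obtain ⟨x, hxy⟩ := exists_covBy (y := y) (by rintro rfl; simp [boxFRank_bot] at hy)
    have := covBy_iff.1 hxy
    exact ⟨x, by omega, this⟩

def rev (x : BoxF f) : BoxF f := fun i => (x i).rev

@[simp] theorem rev_rev (x : BoxF f) : rev (rev x) = x := funext fun i => Fin.rev_rev (x i)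

theorem rev_injective : Function.Injective (rev (f := f)) :=
  Function.LeftInverse.injective rev_rev

@[simp] theorem rev_le_rev : rev x ≤ rev y ↔ y ≤ x :=
  ⟨fun h i => Fin.rev_le_rev.1 (h i), fun h i => Fin.rev_le_rev.2 (h i)⟩

theorem boxFRank_rev_add (x : BoxF f) : boxFRank (rev x) + boxFRank x = ∑ i, f i := by
  simp only [boxFRank, rev, Fin.val_rev, ← sum_add_distrib]
  exact sum_congr rfl fun i _ => by have := (x i).isLt; omega

theorem rev_covBy_rev : rev x ⋖ rev y ↔ y ⋖ x := by
  have := boxFRank_rev_add x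
  have := boxFRank_rev_add y
  rw [covBy_iff, covBy_iff, rev_le_rev]
  constructor <;> rintro ⟨h, _⟩ <;> exact ⟨h, by omega⟩

theorem mem_level_rev {t : ℕ} (ht : t ≤ ∑ i, f i) :
    rev x ∈ level boxFRank t ↔ x ∈ level boxFRank (∑ i, f i - t) := by
  have := boxFRank_rev_add x
  simp only [mem_level]
  omega

theorem card_level_sub {t : ℕ} (ht : t ≤ ∑ i, f i) :
    #(level (boxFRank (d := f)) (∑ i, f i - t)) = #(level (boxFRank (d := f)) t) :=
  card_nbij' rev rev (fun x hx => (mem_level_rev ht).2 hx)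
    (fun x hx => (mem_level_rev ht).1 (by rwa [rev_rev])) (fun x _ => rev_rev x)
    (fun x _ => rev_rev x)

def supp (x : BoxF f) : Finset (Fin k) := {i | x i ≠ 0}

theorem mem_supp : i ∈ supp x ↔ x i ≠ 0 := by simp [supp]

theorem mem_supp_iff_val : i ∈ supp x ↔ 0 < (x i : ℕ) := by
  rw [mem_supp, Ne, Fin.ext_iff, Fin.val_zero]; omega

theorem boxFRank_eq_sum_supp (x : BoxF f) : boxFRank x = ∑ i ∈ supp x, (x i : ℕ) :=
  (sum_subset (subset_univ _) fun i _ hi => by simpa [mem_supp_iff_val] using hi).symm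

theorem card_supp_le_boxFRank (x : BoxF f) : #(supp x) ≤ boxFRank x := by
  rw [boxFRank_eq_sum_supp, card_eq_sum_ones]
  exact sum_le_sum fun i hi => mem_supp_iff_val.1 hi

/-- On the second level the support determines the element: it takes the value `1` on a
support of size two and the value `2` on a support of size one. -/
theorem val_eq_two_div_card_supp (hz : boxFRank z = 2) (hi : i ∈ supp z) :
    (z i : ℕ) = 2 / #(supp z) := by
  have hsum := boxFRank_eq_sum_supp z
  rw [← add_sum_erase _ _ hi] at hsum
  have hrest : #((supp z).erase i) ≤ ∑ j ∈ (supp z).erase i, (z j : ℕ) := by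
    rw [card_eq_sum_ones]
    exact sum_le_sum fun j hj => mem_supp_iff_val.1 (mem_of_mem_erase hj)
  have hzi := mem_supp_iff_val.1 hi
  have hcard := card_erase_add_one hi
  rcases Nat.eq_zero_or_pos #((supp z).erase i) with h0 | hpos
  · rw [card_eq_zero.1 h0, sum_empty] at hsum
    rw [← hcard, card_eq_zero.1 h0]; simp; omega
  · rw [← hcard]
    rw [show #((supp z).erase i) = 1 by omega]; omega

theorem supp_injOn_level_two : Set.InjOn supp (level (boxFRank (d := f)) 2 : Set (BoxF f)) := by
  intro z hz z' hz' h
  simp only [mem_coe, mem_level] at hz hz'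
  funext i
  by_cases hi : i ∈ supp z
  · exact Fin.ext (by rw [val_eq_two_div_card_supp hz hi,
      val_eq_two_div_card_supp hz' (h ▸ hi), h])
  · have hi' := h ▸ hi
    rw [mem_supp, not_not] at hi hi'
    rw [hi, hi']

theorem exists_boxFRank_eq_two_supp_eq {s : Finset (Fin k)} (hs : #s = 1 ∨ #s = 2)
    (hf : ∀ i ∈ s, 2 / #s ≤ f i) : ∃ z : BoxF f, boxFRank z = 2 ∧ supp z = s := by
  classical
  let z : BoxF f := fun i => if hi : i ∈ s then ⟨2 / #s, Nat.lt_succ_of_le (hf i hi)⟩ else 0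
  have hsupp : supp z = s := by
    ext i
    by_cases hi : i ∈ s
    · simp only [mem_supp_iff_val, z, hi, dite_true, iff_true]
      exact Nat.div_pos (by omega) (by omega : 0 < #s)
    · simp [mem_supp_iff_val, z, hi]
  refine ⟨z, ?_, hsupp⟩
  rw [boxFRank_eq_sum_supp, hsupp, sum_congr rfl fun i hi => (by simp [z, hi] :
    (z i : ℕ) = 2 / #s), sum_const, smul_eq_mul]
  rcases hs with h | h <;> rw [h]

theorem card_supp_eq_two_or_eq_singleton (hz : boxFRank z = 2) :
    #(supp z) = 2 ∨ ∃ i, 2 ≤ f i ∧ supp z = {i} := by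
  have hle := card_supp_le_boxFRank z
  have hpos : 0 < #(supp z) := card_pos.2 (nonempty_iff_ne_empty.2 fun h => by
    rw [boxFRank_eq_sum_supp, h, sum_empty] at hz; omega)
  rcases (show #(supp z) = 1 ∨ #(supp z) = 2 by omega) with h1 | h2
  · obtain ⟨i, hi⟩ := card_eq_one.1 h1
    refine Or.inr ⟨i, ?_, hi⟩
    have hzi := val_eq_two_div_card_supp hz (hi ▸ mem_singleton_self i)
    rw [h1, Nat.div_one] at hzi
    exact hzi ▸ Fin.is_le (z i)
  · exact Or.inl h2

theorem card_level_two_supp_subset (hf : ∀ i, 1 ≤ f i) (C : Finset (Fin k)) :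
    #{z ∈ level (boxFRank (d := f)) 2 | supp z ⊆ C} = (#C).choose 2 + #{i ∈ C | 2 ≤ f i} := by
  classical
  have hT : (#C).choose 2 + #{i ∈ C | 2 ≤ f i} =
      #(C.powersetCard 2 ∪ {i ∈ C | 2 ≤ f i}.map ⟨singleton, singleton_injective⟩) := by
    rw [card_union_of_disjoint, card_powersetCard, card_map]
    simp only [disjoint_left, mem_powersetCard, mem_map]
    rintro _ ⟨-, h2⟩ ⟨i, -, rfl⟩
    simp at h2
  rw [hT]
  refine card_bij (fun z _ => supp z) (fun z hz => ?_)
    (fun z hz z' hz' h => supp_injOn_level_two (mem_filter.1 hz).1 (mem_filter.1 hz').1 h)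
    (fun s hs => ?_)
  · obtain ⟨hz2, hzC⟩ := mem_filter.1 hz
    rcases card_supp_eq_two_or_eq_singleton (mem_level.1 hz2) with h2 | ⟨i, hi, h⟩
    · exact mem_union_left _ (mem_powersetCard.2 ⟨hzC, h2⟩)
    · exact mem_union_right _
        (mem_map.2 ⟨i, mem_filter.2 ⟨hzC (h ▸ mem_singleton_self i), hi⟩, h.symm⟩)
  · obtain ⟨hsC, hs, hsf⟩ : s ⊆ C ∧ (#s = 1 ∨ #s = 2) ∧ ∀ i ∈ s, 2 / #s ≤ f i := by
      rcases mem_union.1 hs with hs | hs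
      · obtain ⟨hsC, h2⟩ := mem_powersetCard.1 hs
        exact ⟨hsC, Or.inr h2, fun i _ => by rw [h2]; exact hf i⟩
      · obtain ⟨i, hi, rfl⟩ := mem_map.1 hs
        obtain ⟨hiC, hi2⟩ := mem_filter.1 hi
        simpa using ⟨hiC, hi2⟩
    obtain ⟨z, hz2, rfl⟩ := exists_boxFRank_eq_two_supp_eq hs hsf
    exact ⟨z, mem_filter.2 ⟨mem_level.2 hz2, hsC⟩, rfl⟩

def atom (i : Fin k) : BoxF f := Pi.single i 1

theorem val_atom_self (hi : 1 ≤ f i) : (atom (f := f) i i : ℕ) = 1 := by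
  simp [atom, Nat.mod_eq_of_lt (by omega : 1 < f i + 1)]

theorem atom_apply_of_ne (h : j ≠ i) : atom (f := f) i j = 0 := by simp [atom, h]

theorem supp_atom (hi : 1 ≤ f i) : supp (atom (f := f) i) = {i} := by
  ext j
  by_cases hj : j = i
  · subst hj; simp [mem_supp_iff_val, val_atom_self hi]
  · simp [mem_supp, atom_apply_of_ne hj, hj]

theorem boxFRank_atom (hi : 1 ≤ f i) : boxFRank (atom (f := f) i) = 1 := by
  rw [boxFRank_eq_sum_supp, supp_atom hi, sum_singleton, val_atom_self hi]

theorem atom_le_iff (hi : 1 ≤ f i) : atom i ≤ x ↔ i ∈ supp x := by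
  rw [mem_supp_iff_val]
  refine ⟨fun h => by have := Fin.le_def.1 (h i); rw [val_atom_self hi] at this; omega,
    fun h j => ?_⟩
  by_cases hj : j = i
  · subst hj; rw [Fin.le_def, val_atom_self hi]; omega
  · rw [atom_apply_of_ne hj]; exact Fin.zero_le _

theorem atom_injective (hf : ∀ i, 1 ≤ f i) : Function.Injective (atom (f := f)) := fun i j h => by
  simpa [supp_atom (hf _)] using congrArg supp h

theorem eq_of_le_of_boxFRank_le {x y : BoxF f} (hxy : x ≤ y) (h : boxFRank y ≤ boxFRank x) :
    x = y :=
  hxy.eq_of_not_lt fun hlt => (boxFRank_lt_boxFRank hlt).not_ge h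

theorem exists_eq_atom (hx : boxFRank x = 1) : ∃ i, 1 ≤ f i ∧ atom i = x := by
  obtain ⟨i, hi⟩ : (supp x).Nonempty := by
    rw [← card_pos]; have := boxFRank_eq_sum_supp x
    by_contra h; simp_all
  have hfi : 1 ≤ f i := (mem_supp_iff_val.1 hi).trans_le (Fin.is_le _)
  exact ⟨i, hfi, eq_of_le_of_boxFRank_le ((atom_le_iff hfi).2 hi) (by rw [hx, boxFRank_atom hfi])⟩

theorem level_one_eq (hf : ∀ i, 1 ≤ f i) :
    level (boxFRank (d := f)) 1 = univ.map ⟨atom, atom_injective hf⟩ := by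
  ext x
  simp only [mem_level, mem_map, mem_univ, true_and, Function.Embedding.coeFn_mk]
  constructor
  · intro hx
    obtain ⟨i, -, hi⟩ := exists_eq_atom hx
    exact ⟨i, hi⟩
  · rintro ⟨i, rfl⟩
    exact boxFRank_atom (hf i)

theorem card_level_one (hf : ∀ i, 1 ≤ f i) : #(level (boxFRank (d := f)) 1) = k := by
  simp [level_one_eq hf]

theorem card_level_two_le (hf : ∀ i, 1 ≤ f i) :
    #(level (boxFRank (d := f)) 2) ≤ k.choose 2 + k := by
  have := card_level_two_supp_subset hf univ
  simp only [subset_univ, filter_true, card_univ, Fintype.card_fin] at this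
  rw [this]
  exact Nat.add_le_add_left ((card_filter_le _ _).trans (by simp)) _

theorem shadow_map_atom (hf : ∀ i, 1 ≤ f i) (J : Finset (Fin k)) :
    shadow (J.map ⟨atom, atom_injective hf⟩) = {z ∈ level boxFRank 2 | ¬ supp z ⊆ Jᶜ} := by
  ext z
  simp only [mem_shadow, mem_map, Function.Embedding.coeFn_mk, mem_filter, mem_level,
    not_subset, mem_compl, not_not]
  constructor
  · rintro ⟨_, ⟨i, hi, rfl⟩, hiz⟩
    obtain ⟨hle, hr⟩ := covBy_iff.1 hiz
    exact ⟨by rw [hr, boxFRank_atom (hf i)], i, (atom_le_iff (hf i)).1 hle, hi⟩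
  · rintro ⟨hz, i, hiz, hi⟩
    exact ⟨atom i, ⟨i, hi, rfl⟩, covBy_iff.2 ⟨(atom_le_iff (hf i)).2 hiz,
      by rw [hz, boxFRank_atom (hf i)]⟩⟩

theorem choose_two_le_card_shadow (hf : ∀ i, 1 ≤ f i) {A : Finset (BoxF f)}
    (hA : A ⊆ level boxFRank 1) : k.choose 2 ≤ #(shadow A) + (k - #A).choose 2 := by
  classical
  obtain ⟨J, rfl⟩ : ∃ J : Finset (Fin k), J.map ⟨atom, atom_injective hf⟩ = A := by
    refine ⟨({i | atom i ∈ A} : Finset (Fin k)), ?_⟩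
    ext x
    simp only [mem_map, mem_filter, mem_univ, true_and, Function.Embedding.coeFn_mk]
    refine ⟨fun ⟨i, hi, hix⟩ => hix ▸ hi, fun hx => ?_⟩
    obtain ⟨i, -, rfl⟩ := exists_eq_atom (mem_level.1 (hA hx))
    exact ⟨i, hx, rfl⟩
  have hsplit := card_filter_add_card_filter_not (s := level (boxFRank (d := f)) 2)
    (p := fun z => supp z ⊆ Jᶜ)
  have hall := card_level_two_supp_subset hf univ
  have hcompl := card_level_two_supp_subset hf Jᶜ
  have hmono : #{i ∈ Jᶜ | 2 ≤ f i} ≤ #{i ∈ univ | 2 ≤ f i} :=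
    card_le_card (filter_subset_filter _ (subset_univ _))
  simp only [subset_univ, filter_true, card_univ, Fintype.card_fin] at hall
  rw [card_compl, Fintype.card_fin] at hcompl
  rw [← shadow_map_atom hf] at hsplit
  rw [card_map]
  omega

theorem card_filter_supp_rev_subset (hf : ∀ i, 1 ≤ f i) (h2 : 2 ≤ ∑ i, f i)
    (C : Finset (Fin k)) :
    #{x ∈ level (boxFRank (d := f)) (∑ i, f i - 2) | supp (rev x) ⊆ C} =
      (#C).choose 2 + #{i ∈ C | 2 ≤ f i} := by
  rw [← card_level_two_supp_subset hf C]
  refine card_nbij' rev rev (fun x hx => ?_) (fun z hz => ?_) (fun x _ => rev_rev x)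
    (fun z _ => rev_rev z)
  · simp only [mem_coe, mem_filter] at hx ⊢
    exact ⟨(mem_level_rev h2).2 hx.1, hx.2⟩
  · simp only [mem_coe, mem_filter] at hz ⊢
    exact ⟨(mem_level_rev h2).1 (by rw [rev_rev]; exact hz.1), by rw [rev_rev]; exact hz.2⟩

theorem card_shadow_le_of_supp_rev_subset (h2 : 2 ≤ ∑ i, f i) {Y : Finset (BoxF f)}
    (hY : Y ⊆ level boxFRank (∑ i, f i - 2)) {C : Finset (Fin k)}
    (hC : ∀ y ∈ Y, supp (rev y) ⊆ C) : #(shadow Y) ≤ #C := by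
  classical
  refine (card_le_card fun w hw => ?_).trans (card_image_le (s := C) (f := fun i => rev (atom i)))
  obtain ⟨y, hy, hyw⟩ := mem_shadow.1 hw
  obtain ⟨hle, hrank⟩ := covBy_iff.1 (rev_covBy_rev.2 hyw)
  rw [mem_level.1 ((mem_level_rev h2).2 (hY hy))] at hrank
  obtain ⟨i, hi, hiw⟩ := exists_eq_atom (show boxFRank (rev w) = 1 by omega)
  exact mem_image.2 ⟨i, hC y hy ((atom_le_iff hi).1 (hiw ▸ hle)), by rw [hiw, rev_rev]⟩

theorem exists_card_le_card_shadow (hf : ∀ i, 1 ≤ f i) (h2 : 2 ≤ ∑ i, f i)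
    {X : Finset (BoxF f)} (hX : X ⊆ level boxFRank (∑ i, f i - 2)) :
    ∃ K : Finset (Fin k), #K ≤ #(shadow X) ∧ #X ≤ (#K).choose 2 + #{i ∈ K | 2 ≤ f i} := by
  classical
  refine ⟨({i | rev (atom i) ∈ shadow X} : Finset (Fin k)),
    card_le_card_of_injOn (fun i => rev (atom i)) (fun i hi => (mem_filter.1 hi).2)
      ((rev_injective.comp (atom_injective hf)).injOn), ?_⟩
  rw [← card_filter_supp_rev_subset hf h2]
  refine card_le_card fun x hx => mem_filter.2 ⟨hX hx, fun i hi => ?_⟩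
  have hrx : boxFRank (rev x) = 2 := mem_level.1 ((mem_level_rev h2).2 (hX hx))
  have hcov : atom i ⋖ rev x :=
    covBy_iff.2 ⟨(atom_le_iff (hf i)).2 hi, by rw [hrx, boxFRank_atom (hf i)]⟩
  rw [← rev_covBy_rev, rev_rev] at hcov
  exact mem_filter.2 ⟨mem_univ _, mem_shadow.2 ⟨x, hx, hcov⟩⟩

/-- The elements of corank two whose complement is supported in a set `C` of `c` coordinates lie
below the `c` coatoms indexed by `C`; there are `C(c, 2)` of them plus one for every `i ∈ C` with
`2 ≤ f i`, and `C` can be chosen to contain `min c #{i | 2 ≤ f i}` such coordinates. -/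
theorem exists_subset_level_sub_two (hf : ∀ i, 1 ≤ f i) (h2 : 2 ≤ ∑ i, f i) {c r : ℕ}
    (hc : c ≤ k) (hr : r ≤ c.choose 2 + min c #{i | 2 ≤ f i}) :
    ∃ Y ⊆ level (boxFRank (d := f)) (∑ i, f i - 2), #Y = r ∧ #(shadow Y) ≤ c := by
  classical
  obtain ⟨L, hL, hLcard⟩ := exists_subset_card_eq (min_le_right c #{i | 2 ≤ f i})
  obtain ⟨C, hLC, -, hC⟩ := exists_subsuperset_card_eq (n := c) (subset_univ L) (by omega)
    (by simpa using hc)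
  have hdoubles : #L ≤ #{i ∈ C | 2 ≤ f i} :=
    card_le_card fun i hi => mem_filter.2 ⟨hLC hi, (mem_filter.1 (hL hi)).2⟩
  obtain ⟨Y, hY, hYcard⟩ := exists_subset_card_eq
    (s := {x ∈ level (boxFRank (d := f)) (∑ i, f i - 2) | supp (rev x) ⊆ C}) (n := r)
    (by rw [card_filter_supp_rev_subset hf h2, hC]; omega)
  refine ⟨Y, hY.trans (filter_subset _ _), hYcard, hC ▸ card_shadow_le_of_supp_rev_subset h2
    (hY.trans (filter_subset _ _)) fun y hy => (mem_filter.1 (hY hy)).2⟩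

theorem three_le_card_shadow (hf : ∀ i, 1 ≤ f i) (h2 : 2 ≤ ∑ i, f i) {X : Finset (BoxF f)}
    (hX : X ⊆ level boxFRank (∑ i, f i - 2)) (hcard : 2 + min 2 #{i | 2 ≤ f i} ≤ #X) :
    3 ≤ #(shadow X) := by
  obtain ⟨K, hK, hXK⟩ := exists_card_le_card_shadow hf h2 hX
  by_contra! h
  have hK1 : #{i ∈ K | 2 ≤ f i} ≤ #K := card_filter_le _ _
  have hK2 : #{i ∈ K | 2 ≤ f i} ≤ #{i | 2 ≤ f i} :=
    card_le_card (filter_subset_filter _ (subset_univ _))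
  have hK3 : (#K).choose 2 ≤ 1 := Nat.choose_le_choose 2 (show #K ≤ 2 by omega)
  omega

end BoxF

/-! ### The diamond product of two boxes -/

namespace Diamond

variable {n m : ℕ} {d : Fin n → ℕ} {e : Fin m → ℕ}

theorem diamondRank_boxF_inl (p : BoxF d) :
    diamondRank boxFRank boxFRank (∑ i, d i) (inl p : Diamond (BoxF d) (BoxF e)) = boxFRank p :=
  diamondRank_inl BoxF.boxFRank_bot BoxF.boxFRank_top p

theorem diamondRank_boxF_inr (hs : ∑ i, d i = ∑ i, e i) (q : BoxF e) :
    diamondRank boxFRank boxFRank (∑ i, d i) (inr q : Diamond (BoxF d) (BoxF e)) = boxFRank q :=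
  diamondRank_inr BoxF.boxFRank_bot (BoxF.boxFRank_top.trans hs.symm) q

theorem map_inl_subset_level {t : ℕ} {A : Finset (BoxF d)} (hA : A ⊆ level boxFRank t) :
    A.map (inlEmb (Q := BoxF e)).toEmbedding ⊆
      level (diamondRank boxFRank boxFRank (∑ i, d i)) t := by
  intro x hx
  obtain ⟨p, hp, rfl⟩ := mem_map.1 hx
  rw [mem_level, RelEmbedding.coe_toEmbedding, inlEmb_apply, diamondRank_boxF_inl]
  exact mem_level.1 (hA hp)

theorem map_inr_subset_level (hs : ∑ i, d i = ∑ i, e i) {t : ℕ} {B : Finset (BoxF e)}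
    (hB : B ⊆ level boxFRank t) :
    B.map (inrEmb (P := BoxF d)).toEmbedding ⊆
      level (diamondRank boxFRank boxFRank (∑ i, d i)) t := by
  intro x hx
  obtain ⟨q, hq, rfl⟩ := mem_map.1 hx
  rw [mem_level, RelEmbedding.coe_toEmbedding, inrEmb_apply, diamondRank_boxF_inr hs]
  exact mem_level.1 (hB hq)

open Classical in
theorem exists_eq_map_inl_union_map_inr_of_subset_level (hd : (⊥ : BoxF d) ≠ ⊤)
    (hs : ∑ i, d i = ∑ i, e i) {t : ℕ} {X : Finset (Diamond (BoxF d) (BoxF e))}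
    (hX : X ⊆ level (diamondRank boxFRank boxFRank (∑ i, d i)) t) :
    ∃ A ⊆ level (boxFRank (d := d)) t, ∃ B ⊆ level (boxFRank (d := e)) t,
      X = A.map inlEmb.toEmbedding ∪ B.map inrEmb.toEmbedding := by
  refine ⟨_, fun p hp => ?_, _, fun q hq => ?_, eq_map_inl_union_map_inr hd X⟩
  · rw [mem_level, ← diamondRank_boxF_inl (e := e)]
    exact mem_level.1 (hX (mem_filter.1 hp).2)
  · rw [mem_level, ← diamondRank_boxF_inr hs]
    exact mem_level.1 (hX (mem_filter.1 hq).2)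

/-- A family of `m` atoms containing `a ≥ 1` atoms of the first box spans at least
`C(m, 2) + a (n - a)` elements of rank two. -/
theorem lt_card_shadow_of_subset_level_one (hd : ∀ i, 1 ≤ d i) (he : ∀ i, 1 ≤ e i)
    (hmn : m + 2 ≤ n) (hs : ∑ i, d i = ∑ i, e i) {B : Finset (Diamond (BoxF d) (BoxF e))}
    (hB : B ⊆ level (diamondRank boxFRank boxFRank (∑ i, d i)) 1) (hcard : #B = m)
    (hne : B ≠ (level boxFRank 1).map (inrEmb (P := BoxF d)).toEmbedding) :
    m.choose 2 + m < #(shadow B) := by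
  classical
  have hn := Fin.le_sum_of_one_le hd
  obtain ⟨BP, hBP, BQ, hBQ, rfl⟩ := exists_eq_map_inl_union_map_inr_of_subset_level
    (BoxF.bot_ne_top (by omega)) hs hB
  have hmid : ∀ t, t ≠ 0 → t < ∑ i, d i → ∀ A ⊆ level boxFRank t, ∀ p ∈ A, p ≠ ⊥ ∧ p ≠ ⊤ :=
    fun t h0 hS A hA p hp => BoxF.ne_bot_and_ne_top_of_mem_level h0 hS.ne (hA hp)
  rw [card_union_of_disjoint (disjoint_map_inl_map_inr (hmid 1 one_ne_zero (by omega) BP hBP) _),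
    card_map, card_map] at hcard
  have ha : 1 ≤ #BP := by
    by_contra! h0
    rw [Nat.lt_one_iff, card_eq_zero] at h0
    subst h0
    rw [card_empty, zero_add] at hcard
    refine hne ?_
    rw [map_empty, empty_union,
      eq_of_subset_of_card_le hBQ (by rw [BoxF.card_level_one he]; omega)]
  have hBP2 : shadow BP ⊆ level boxFRank 2 := (shadow_mono hBP).trans (BoxF.shadow_level 1).le
  rw [shadow_union, shadow_map_inl fun h => BoxF.bot_notMem_level one_ne_zero (hBP h),
    shadow_map_inr fun h => BoxF.bot_notMem_level one_ne_zero (hBQ h),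
    card_union_of_disjoint (disjoint_map_inl_map_inr
      (hmid 2 two_ne_zero (by omega) _ hBP2) _), card_map, card_map]
  have hP := BoxF.choose_two_le_card_shadow hd hBP
  have hQ := BoxF.choose_two_le_card_shadow he hBQ
  rw [show m - #BQ = #BP by omega] at hQ
  have := Nat.choose_two_sub_add_choose_two_add_lt ha (by omega : #BP ≤ m) hmn
  omega

variable {lt : Diamond (BoxF d) (BoxF e) → Diamond (BoxF d) (BoxF e) → Prop}

theorem isInitSeg_map_inr_level_one
    (hM : MacaulayWith (diamondRank boxFRank boxFRank (∑ i, d i)) lt)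
    (hd : ∀ i, 1 ≤ d i) (he : ∀ i, 1 ≤ e i) (hmn : m + 2 ≤ n) (hs : ∑ i, d i = ∑ i, e i) :
    IsInitSeg (diamondRank boxFRank boxFRank (∑ i, d i)) lt 1
      ((level boxFRank 1).map (inrEmb (P := BoxF d)).toEmbedding) := by
  refine hM.isInitSeg_of_forall_card_shadow_lt (map_inr_subset_level hs subset_rfl)
    fun B hB hcard hne => ?_
  rw [card_map, BoxF.card_level_one he] at hcard
  calc #(shadow ((level boxFRank 1).map (inrEmb (P := BoxF d)).toEmbedding))
      = #(level (boxFRank (d := e)) 2) := by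
        rw [shadow_map_inr (BoxF.bot_notMem_level one_ne_zero), BoxF.shadow_level, card_map]
    _ ≤ m.choose 2 + m := BoxF.card_level_two_le he
    _ < #(shadow B) := lt_card_shadow_of_subset_level_one hd he hmn hs hB hcard hne

theorem isInitSeg_map_inr_level
    (hM : MacaulayWith (diamondRank boxFRank boxFRank (∑ i, d i)) lt)
    (h1 : IsInitSeg (diamondRank boxFRank boxFRank (∑ i, d i)) lt 1
      ((level boxFRank 1).map (inrEmb (P := BoxF d)).toEmbedding))
    {t : ℕ} (ht : 1 ≤ t) :
    IsInitSeg (diamondRank boxFRank boxFRank (∑ i, d i)) lt t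
      ((level boxFRank t).map (inrEmb (P := BoxF d)).toEmbedding) := by
  induction t, ht using Nat.le_induction with
  | base => exact h1
  | succ t ht ih =>
    have := hM.isInitSeg_shadow ih
    rwa [shadow_map_inr (BoxF.bot_notMem_level (by omega)), BoxF.shadow_level] at this

theorem exists_subset_level_sub_two_card_shadow_le (hd : ∀ i, 1 ≤ d i) (hm : 1 ≤ m)
    (hmn : m + 2 ≤ n) {r : ℕ} (hr : r ≤ m.choose 2 + m + (2 + min 2 #{i | 2 ≤ d i})) :
    ∃ A ⊆ level (diamondRank boxFRank boxFRank (∑ i, d i) : Diamond (BoxF d) (BoxF e) → ℕ)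
      (∑ i, d i - 2), #A = r ∧ #(shadow A) ≤ m + 2 := by
  have hn := Fin.le_sum_of_one_le hd
  obtain ⟨Y, hY, hYcard, hYshadow⟩ := BoxF.exists_subset_level_sub_two hd (by omega)
    (c := m + 2) (r := r) (by omega) (by rw [Nat.choose_two_add]; simp; omega)
  refine ⟨_, map_inl_subset_level hY, by rw [card_map, hYcard], ?_⟩
  rwa [shadow_map_inl fun h => BoxF.bot_notMem_level (by omega) (hY h), card_map]

/-- The `m` counts the coatoms of the second box, the `3` comes from
`BoxF.three_le_card_shadow`. -/
theorem add_three_le_card_shadow (hd : ∀ i, 1 ≤ d i) (he : ∀ i, 1 ≤ e i) (hm : 1 ≤ m)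
    (hmn : m + 2 ≤ n) (hs : ∑ i, d i = ∑ i, e i) {St : Finset (Diamond (BoxF d) (BoxF e))}
    (hSt : St ⊆ level (diamondRank boxFRank boxFRank (∑ i, d i)) (∑ i, d i - 2))
    (hLSt : (level boxFRank (∑ i, d i - 2)).map (inrEmb (P := BoxF d)).toEmbedding ⊆ St)
    (hcard : #((level (boxFRank (d := e)) (∑ i, d i - 2)).map
      (inrEmb (P := BoxF d)).toEmbedding) + (2 + min 2 #{i | 2 ≤ d i}) ≤ #St) :
    m + 3 ≤ #(shadow St) := by
  classical
  have hn := Fin.le_sum_of_one_le hd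
  set L := (level (boxFRank (d := e)) (∑ i, d i - 2)).map (inrEmb (P := BoxF d)).toEmbedding
  obtain ⟨X, hX, BQ, hBQ, hXeq⟩ := exists_eq_map_inl_union_map_inr_of_subset_level
    (BoxF.bot_ne_top (by omega)) hs (sdiff_subset.trans hSt : St \ L ⊆ _)
  have hBQ0 : BQ = ∅ := by
    refine eq_empty_of_forall_notMem fun q hq => ?_
    have hmem : inr q ∈ St \ L := hXeq ▸ mem_union_right _ (mem_map_of_mem _ hq)
    exact (mem_sdiff.1 hmem).2 (mem_map_of_mem _ (hBQ hq))
  rw [hBQ0, map_empty, union_empty] at hXeq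
  have hX3 := BoxF.three_le_card_shadow hd (by omega) hX (by
    have := card_sdiff_of_subset hLSt
    rw [hXeq, card_map] at this
    omega)
  have hXmid : ∀ x ∈ shadow X, x ≠ ⊥ ∧ x ≠ ⊤ := fun x hx =>
    BoxF.ne_bot_and_ne_top_of_mem_level (t := ∑ i, d i - 2 + 1) (by omega) (by omega)
      ((shadow_mono hX).trans (BoxF.shadow_level _).le hx)
  have hL : #(shadow L) = m := by
    rw [shadow_map_inr (BoxF.bot_notMem_level (by omega)), BoxF.shadow_level, card_map, hs,
      show ∑ i, e i - 2 + 1 = ∑ i, e i - 1 by omega, BoxF.card_level_sub (by omega),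
      BoxF.card_level_one he]
  rw [← union_sdiff_of_subset hLSt, hXeq, shadow_union,
    shadow_map_inl fun h => BoxF.bot_notMem_level (by omega) (hX h),
    card_union_of_disjoint, card_map, hL]
  · omega
  · rw [shadow_map_inr (BoxF.bot_notMem_level (by omega))]
    exact (disjoint_map_inl_map_inr hXmid _).symm

theorem not_isInitSeg_map_inr_level_sub_two
    (hM : MacaulayWith (diamondRank boxFRank boxFRank (∑ i, d i)) lt)
    (hd : ∀ i, 1 ≤ d i) (he : ∀ i, 1 ≤ e i) (hm : 1 ≤ m) (hmn : m + 2 ≤ n)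
    (hs : ∑ i, d i = ∑ i, e i) :
    ¬ IsInitSeg (diamondRank boxFRank boxFRank (∑ i, d i)) lt (∑ i, d i - 2)
      ((level boxFRank (∑ i, d i - 2)).map (inrEmb (P := BoxF d)).toEmbedding) := by
  intro hL
  have := hM.isStrictTotalOrder
  have hn := Fin.le_sum_of_one_le hd
  have hLcard : #((level (boxFRank (d := e)) (∑ i, d i - 2)).map
      (inrEmb (P := BoxF d)).toEmbedding) ≤ m.choose 2 + m := by
    rw [card_map, hs, BoxF.card_level_sub (by omega)]
    exact BoxF.card_level_two_le he
  obtain ⟨A, hA, hAcard, hAshadow⟩ := exists_subset_level_sub_two_card_shadow_le hd hm hmn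
    (e := e) (Nat.add_le_add_right hLcard _)
  obtain ⟨St, hSt, hStcard⟩ := exists_isInitSeg (lt := lt) (hAcard ▸ card_le_card hA)
  have hlow := add_three_le_card_shadow hd he hm hmn hs hSt.subset_level
    (hL.subset_of_card_le hSt (by omega)) hStcard.ge
  have hup := hM.card_shadow_le hA hSt (hStcard.trans hAcard.symm)
  omega

end Diamond

/-- The diamond product of an n-dimensional box poset and an m-dimensional box poset of the
same rank with `m ≤ n - 2` is not Macaulay. -/
theorem stmt10 {n m : ℕ} (d : Fin n → ℕ) (e : Fin m → ℕ) (hd : ∀ i, 1 ≤ d i)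
    (he : ∀ i, 1 ≤ e i) (hmn : m + 2 ≤ n) (hs : ∑ i, d i = ∑ i, e i) :
    ¬ IsMacaulay (diamondRank boxFRank boxFRank (∑ i, d i) :
      Diamond (BoxF d) (BoxF e) → ℕ) := by
  rintro ⟨lt, hM⟩
  have hn := Fin.le_sum_of_one_le hd
  have hm : 1 ≤ m := by
    by_contra! h
    obtain rfl : m = 0 := by omega
    simp only [univ_eq_empty, sum_empty] at hs
    omega
  have hatoms := Diamond.isInitSeg_map_inr_level_one hM hd he hmn hs
  exact Diamond.not_isInitSeg_map_inr_level_sub_two hM hd he hm hmn hs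
    (Diamond.isInitSeg_map_inr_level hM hatoms (by omega))
end

section
/- Consider the heart-shaped poset M = {(i,j) in N^2 : (i < a0 and j < a1) or (i < b0 and j < b1)} with componentwise order, where b0 < a0, a1 < b1, a0 >= b1, a0 + a1 >= b0 + b1, and a1 + b0 <= b1. Then M is Macaulay with respect to the twist order with y > x. -/
open Finset

variable {α : Type*}

/-- The heart-shaped poset: the monomial poset of K[x,y]/((x^a0,y^a1) ∩ (x^b0,y^b1)). -/
abbrev Heart (a0 a1 b0 b1 : ℕ) :=
  {p : Fin (max a0 b0) × Fin (max a1 b1) //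
    (p.1.val < a0 ∧ p.2.val < a1) ∨ (p.1.val < b0 ∧ p.2.val < b1)}

def heartRank {a0 a1 b0 b1 : ℕ} : Heart a0 a1 b0 b1 → ℕ := fun p => p.1.1.val + p.1.2.val

/-- The twist order with y > x on the heart-shaped poset: compare by rank; within a rank,
elements with y-exponent < a1 are smaller than those with y-exponent ≥ a1; among the former
compare by y-exponent, among the latter by reversed y-exponent. -/
def heartTwistLt {a0 b0 b1 : ℕ} (a1 : ℕ) (x y : Heart a0 a1 b0 b1) : Prop :=
  heartRank x < heartRank y ∨ (heartRank x = heartRank y ∧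
    ((x.1.2.val < a1 ∧ y.1.2.val < a1 ∧ x.1.2.val < y.1.2.val) ∨
     (x.1.2.val < a1 ∧ a1 ≤ y.1.2.val) ∨
     (a1 ≤ x.1.2.val ∧ a1 ≤ y.1.2.val ∧ y.1.2.val < x.1.2.val)))

/-!
Each rank level of the heart is a chain, parametrised by the exponent `j` of `y`, and in this
coordinate the upper shadow of a set `A` of exponents is `A ∪ (A + 1)` cut down to the next level.

If `d + 2 ≤ a1 + b0`, levels `d` and `d + 1` are the full intervals `[0, d]` and `[0, d + 1]`: every
nonempty set gains an element, and twist initial segments, being intervals, gain exactly one.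
Otherwise both levels split into a lower interval `j < a1` and an upper interval `a1 ≤ j` that do
not interact. From one level to the next, each interval stays put, moves up by one, or loses its
bottom element, so each part of `A` loses at most one element, and only when it fills its interval.
Twist initial segments fill the upper part first, and `b0 + b1 ≤ a0 + a1` makes the lower part at
least as long as the upper one whenever it shrinks, so they never lose more than `A` does.
-/

theorem mem_shadow_iff_exists_covBy {β : Type*} [PartialOrder β] [Fintype β] {X : Finset β}
    {b : β} : b ∈ _root_.shadow X ↔ ∃ a ∈ X, a ⋖ b := by
  simp [_root_.shadow]

theorem Finset.subset_or_subset_of_upClosed {β : Type*} {r : β → β → Prop}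
    [Std.Trichotomous r] {J S T : Finset β} (hSJ : S ⊆ J) (hTJ : T ⊆ J)
    (hS : ∀ x ∈ S, ∀ y ∈ J, r x y → y ∈ S) (hT : ∀ x ∈ T, ∀ y ∈ J, r x y → y ∈ T) :
    S ⊆ T ∨ T ⊆ S := by
  refine or_iff_not_imp_left.2 fun hST y hy => ?_
  obtain ⟨x, hxS, hxT⟩ := not_subset.1 hST
  by_contra hyS
  refine hxT (Std.Trichotomous.trichotomous x y (fun hxy => hyS (hS x hxS y (hTJ hy) hxy))
    (fun hyx => hxT (hT y hy x (hSJ hxS) hyx)) ▸ hy)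

theorem Finset.eq_of_upClosed_of_card_eq {β : Type*} {r : β → β → Prop} [Std.Trichotomous r]
    {J S T : Finset β} (hSJ : S ⊆ J) (hTJ : T ⊆ J)
    (hS : ∀ x ∈ S, ∀ y ∈ J, r x y → y ∈ S) (hT : ∀ x ∈ T, ∀ y ∈ J, r x y → y ∈ T)
    (hcard : S.card = T.card) : S = T := by
  rcases subset_or_subset_of_upClosed hSJ hTJ hS hT with h | h
  · exact eq_of_subset_of_card_le h hcard.ge
  · exact (eq_of_subset_of_card_le h hcard.le).symm

def upSpread (A : Finset ℕ) : Finset ℕ := A ∪ A.image (· + 1)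

theorem upSpread_mono {A B : Finset ℕ} (h : A ⊆ B) : upSpread A ⊆ upSpread B :=
  union_subset_union h (image_subset_image h)

theorem mem_upSpread {A : Finset ℕ} {j : ℕ} :
    j ∈ upSpread A ↔ j ∈ A ∨ (0 < j ∧ j - 1 ∈ A) := by
  simp only [upSpread, mem_union, mem_image]
  constructor
  · rintro (h | ⟨i, hi, rfl⟩)
    · exact Or.inl h
    · exact Or.inr ⟨by omega, by simpa using hi⟩
  · rintro (h | ⟨h1, h2⟩)
    · exact Or.inl h
    · exact Or.inr ⟨j - 1, h2, by omega⟩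

theorem card_lt_card_upSpread {A : Finset ℕ} (hA : A.Nonempty) : A.card < (upSpread A).card := by
  have hmax : A.max' hA + 1 ∉ A := fun h => by have := A.le_max' _ h; omega
  calc A.card < (insert (A.max' hA + 1) A).card := by rw [card_insert_of_notMem hmax]; omega
    _ ≤ (upSpread A).card := card_le_card <| insert_subset
          (mem_union_right _ (mem_image_of_mem _ (A.max'_mem hA))) subset_union_left

theorem card_le_card_upSpread_inter_of_injOn {A T : Finset ℕ} (f : ℕ → ℕ)
    (hf : ∀ x ∈ A, (f x = x ∨ f x = x + 1) ∧ f x ∈ T) (hinj : Set.InjOn f A) :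
    A.card ≤ (upSpread A ∩ T).card := by
  refine card_le_card_of_injOn f (fun x hx => mem_inter.2 ⟨?_, (hf x hx).2⟩) hinj
  rcases (hf x hx).1 with h | h <;> rw [h]
  · exact mem_union_left _ hx
  · exact mem_union_right _ (mem_image_of_mem _ hx)

theorem card_le_card_upSpread_inter_Ico_add_one {A : Finset ℕ} {p q p' q' : ℕ}
    (hA : A ⊆ Ico p q) (hp : p' ≤ p + 1) (hq : q ≤ q') :
    A.card ≤ (upSpread A ∩ Ico p' q').card + 1 := by
  have : A.erase p ⊆ upSpread A ∩ Ico p' q' := fun x hx => by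
    obtain ⟨hxp, hxA⟩ := mem_erase.1 hx
    have := mem_Ico.1 (hA hxA)
    exact mem_inter.2 ⟨mem_union_left _ hxA, mem_Ico.2 ⟨by omega, by omega⟩⟩
  have := card_le_card this
  have := pred_card_le_card_erase (s := A) (a := p)
  omega

theorem card_le_card_upSpread_inter_Ico {A : Finset ℕ} {p q p' q' : ℕ}
    (hA : A ⊆ Ico p q) (hp : p' ≤ p + 1) (hq : q ≤ q') (h : A.card < q - p ∨ p' ≤ p ∨ q < q') :
    A.card ≤ (upSpread A ∩ Ico p' q').card := by
  rcases h with h | h | h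
  · obtain ⟨g, hg, hgA⟩ : ∃ g ∈ Ico p q, g ∉ A := by
      by_contra! hall
      have := card_le_card hall
      rw [Nat.card_Ico] at this
      omega
    have hg := mem_Ico.1 hg
    -- shift the elements below the gap `g` up by one
    refine card_le_card_upSpread_inter_of_injOn (fun x => if x < g then x + 1 else x)
      (fun x hx => ?_) (fun x hx y hy hxy => ?_)
    · have hx' := mem_Ico.1 (hA hx)
      have hxg : x ≠ g := fun h => hgA (h ▸ hx)
      split_ifs
      · exact ⟨Or.inr rfl, mem_Ico.2 ⟨by omega, by omega⟩⟩
      · exact ⟨Or.inl rfl, mem_Ico.2 ⟨by omega, by omega⟩⟩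
    · have hxg : x ≠ g := fun h => hgA (h ▸ hx)
      have hyg : y ≠ g := fun h => hgA (h ▸ hy)
      dsimp only at hxy
      split_ifs at hxy <;> omega
  · refine card_le_card_upSpread_inter_of_injOn id (fun x hx => ?_) (Set.injOn_id _)
    have := mem_Ico.1 (hA hx)
    exact ⟨Or.inl rfl, mem_Ico.2 ⟨by rw [id]; omega, by rw [id]; omega⟩⟩
  · refine card_le_card_upSpread_inter_of_injOn (· + 1) (fun x hx => ?_)
      (fun x _ y _ hxy => by simpa using hxy)
    have := mem_Ico.1 (hA hx)
    exact ⟨Or.inr rfl, mem_Ico.2 ⟨by omega, by omega⟩⟩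

namespace Heart

variable (a0 a1 b0 b1 : ℕ)

/-- The `y`-exponents of the elements of rank `d` of the heart. -/
def level (d : ℕ) : Finset ℕ :=
  (range (d + 1)).filter fun j => (d - j < a0 ∧ j < a1) ∨ (d - j < b0 ∧ j < b1)

def twistLt (j j' : ℕ) : Prop :=
  (j < a1 ∧ j' < a1 ∧ j < j') ∨ (j < a1 ∧ a1 ≤ j') ∨ (a1 ≤ j ∧ a1 ≤ j' ∧ j' < j)

instance : Std.Trichotomous (twistLt a1) :=
  ⟨fun j j' h h' => by unfold twistLt at h h'; omega⟩

def IsTwistInitSeg (d : ℕ) (S : Finset ℕ) : Prop :=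
  S ⊆ level a0 a1 b0 b1 d ∧ ∀ j ∈ S, ∀ j' ∈ level a0 a1 b0 b1 d, twistLt a1 j j' → j' ∈ S

def levelShadow (d : ℕ) (A : Finset ℕ) : Finset ℕ := upSpread A ∩ level a0 a1 b0 b1 (d + 1)

/- For `b0 < a0`, `level d` is `Ico (d + 1 - a0) (lowerEnd d)`, where `j < a1`, together with
`Ico (upperStart d) (min b1 (d + 1))`, of length `upperCard d`, where `a1 ≤ j`. -/
def upperStart (d : ℕ) : ℕ := max a1 (d + 1 - b0)

def upperCard (d : ℕ) : ℕ := min b1 (d + 1) - upperStart a1 b0 d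

def lowerEnd (d : ℕ) : ℕ := min a1 (d + 1)

/-- The `k` largest elements of `level d` in the twist order: the upper part `a1 ≤ j` is used up
from its bottom first, then the lower part from its top. -/
def twistSeg (d k : ℕ) : Finset ℕ :=
  Ico (upperStart a1 b0 d) (upperStart a1 b0 d + min k (upperCard a1 b0 b1 d)) ∪
    Ico (lowerEnd a1 d - (k - upperCard a1 b0 b1 d)) (lowerEnd a1 d)

variable {a0 a1 b0 b1}

theorem mem_level {d j : ℕ} :
    j ∈ level a0 a1 b0 b1 d ↔ j ≤ d ∧ ((d - j < a0 ∧ j < a1) ∨ (d - j < b0 ∧ j < b1)) := by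
  simp [level]

theorem mem_twistSeg {d k j : ℕ} : j ∈ twistSeg a1 b0 b1 d k ↔
    (upperStart a1 b0 d ≤ j ∧ j < upperStart a1 b0 d + min k (upperCard a1 b0 b1 d)) ∨
    (lowerEnd a1 d - (k - upperCard a1 b0 b1 d) ≤ j ∧ j < lowerEnd a1 d) := by
  simp [twistSeg]

theorem card_level_le (h1 : b0 < a0) (d : ℕ) :
    (level a0 a1 b0 b1 d).card ≤ lowerEnd a1 d - (d + 1 - a0) + upperCard a1 b0 b1 d := by
  have : level a0 a1 b0 b1 d ⊆
      Ico (d + 1 - a0) (lowerEnd a1 d) ∪ Ico (upperStart a1 b0 d) (min b1 (d + 1)) := fun j hj => by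
    rw [mem_level] at hj
    simp only [mem_union, mem_Ico, lowerEnd, upperStart]
    omega
  refine (card_le_card this).trans ((card_union_le _ _).trans ?_)
  simp only [Nat.card_Ico, upperCard]
  omega

theorem card_twistSeg (h1 : b0 < a0) {d k : ℕ} (hk : k ≤ (level a0 a1 b0 b1 d).card) :
    (twistSeg a1 b0 b1 d k).card = k := by
  have := hk.trans (card_level_le h1 d)
  rw [twistSeg, card_union_of_disjoint, Nat.card_Ico, Nat.card_Ico]
  · simp only [lowerEnd, upperStart, upperCard] at *
    omega
  · refine disjoint_left.2 fun j hj hj' => ?_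
    simp only [mem_Ico, lowerEnd, upperStart, upperCard] at *
    omega

theorem isTwistInitSeg_twistSeg (h1 : b0 < a0) {d k : ℕ}
    (hk : k ≤ (level a0 a1 b0 b1 d).card) :
    IsTwistInitSeg a0 a1 b0 b1 d (twistSeg a1 b0 b1 d k) := by
  have := hk.trans (card_level_le h1 d)
  refine ⟨fun j hj => ?_, fun j hj j' hj' hjj' => ?_⟩
  · rw [mem_twistSeg] at hj
    rw [mem_level]
    simp only [lowerEnd, upperStart, upperCard] at *
    omega
  · rw [mem_twistSeg] at hj ⊢
    rw [mem_level] at hj'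
    unfold twistLt at hjj'
    simp only [lowerEnd, upperStart, upperCard] at *
    omega

theorem IsTwistInitSeg.eq_twistSeg (h1 : b0 < a0) {d : ℕ} {S : Finset ℕ}
    (hS : IsTwistInitSeg a0 a1 b0 b1 d S) : S = twistSeg a1 b0 b1 d S.card :=
  have hk := card_le_card hS.1
  eq_of_upClosed_of_card_eq hS.1 (isTwistInitSeg_twistSeg h1 hk).1 hS.2
    (isTwistInitSeg_twistSeg h1 hk).2 (card_twistSeg h1 hk).symm

theorem twistSeg_zero (d : ℕ) : twistSeg a1 b0 b1 d 0 = ∅ := by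
  ext j
  simp [mem_twistSeg]

theorem level_eq_range (h3 : b1 ≤ a0) (h5 : a1 + b0 ≤ b1) {e : ℕ} (he : e + 1 ≤ a1 + b0) :
    level a0 a1 b0 b1 e = range (e + 1) := by
  ext j
  rw [mem_level, mem_range]
  omega

theorem level_eq_of_le (h1 : b0 < a0) {e : ℕ} (he : a1 + b0 ≤ e + 1) :
    level a0 a1 b0 b1 e = Ico (e + 1 - a0) a1 ∪ Ico (e + 1 - b0) (min b1 (e + 1)) := by
  ext j
  rw [mem_level, mem_union, mem_Ico, mem_Ico]
  omega

theorem card_levelShadow_twistSeg_le_of_lt (h1 : b0 < a0) (h3 : b1 ≤ a0) (h5 : a1 + b0 ≤ b1)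
    {d : ℕ} (hd : d + 2 ≤ a1 + b0) {A : Finset ℕ} (hA : A ⊆ level a0 a1 b0 b1 d) :
    (levelShadow a0 a1 b0 b1 d (twistSeg a1 b0 b1 d A.card)).card ≤
      (levelShadow a0 a1 b0 b1 d A).card := by
  rcases A.eq_empty_or_nonempty with rfl | hne
  · simp [twistSeg_zero, levelShadow]
  have hlev := level_eq_range (a0 := a0) h3 h5 (e := d) (by omega)
  have hlev' := level_eq_range (a0 := a0) h3 h5 (e := d + 1) (by omega)
  have hk := (card_le_card hA).trans (card_level_le h1 d)
  have hAsh : levelShadow a0 a1 b0 b1 d A = upSpread A := by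
    refine inter_eq_left.2 fun j hj => ?_
    rw [hlev', mem_range]
    rw [hlev] at hA
    rcases mem_upSpread.1 hj with hj | hj
    · have := mem_range.1 (hA hj); omega
    · have := mem_range.1 (hA hj.2); omega
  have hseg : levelShadow a0 a1 b0 b1 d (twistSeg a1 b0 b1 d A.card) ⊆
      Ico (lowerEnd a1 d - (A.card - upperCard a1 b0 b1 d))
        (lowerEnd a1 d + min A.card (upperCard a1 b0 b1 d) + 1) := fun j hj => by
    simp only [levelShadow, mem_inter, mem_upSpread, mem_twistSeg, mem_Ico] at hj ⊢
    simp only [lowerEnd, upperStart, upperCard] at *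
    omega
  calc _ ≤ _ := card_le_card hseg
    _ ≤ A.card + 1 := by
      simp only [Nat.card_Ico, lowerEnd, upperStart, upperCard] at hk ⊢
      omega
    _ ≤ (levelShadow a0 a1 b0 b1 d A).card := hAsh ▸ card_lt_card_upSpread hne

theorem card_add_card_le_card_levelShadow (h1 : b0 < a0) {d : ℕ} (hd : a1 + b0 ≤ d + 1)
    (A : Finset ℕ) :
    (upSpread (A.filter (· < a1)) ∩ Ico (d + 2 - a0) a1).card +
      (upSpread (A.filter (a1 ≤ ·)) ∩ Ico (d + 2 - b0) (min b1 (d + 2))).card ≤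
      (levelShadow a0 a1 b0 b1 d A).card := by
  rw [← card_union_of_disjoint]
  · refine card_le_card (union_subset ?_ ?_) <;>
      refine fun j hj => mem_inter.2 ⟨upSpread_mono (filter_subset _ A) (mem_inter.1 hj).1, ?_⟩ <;>
      have := mem_Ico.1 (mem_inter.1 hj).2 <;>
      rw [level_eq_of_le h1 (by omega), mem_union, mem_Ico, mem_Ico] <;>
      omega
  · refine disjoint_left.2 fun j hj hj' => ?_
    have := mem_Ico.1 (mem_inter.1 hj).2
    have := mem_Ico.1 (mem_inter.1 hj').2
    omega

theorem levelShadow_twistSeg_subset_of_le (h1 : b0 < a0) {d : ℕ} (hd : a1 + b0 ≤ d + 1)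
    (k : ℕ) : levelShadow a0 a1 b0 b1 d (twistSeg a1 b0 b1 d k) ⊆
      Ico (d + 2 - b0) (min (d + 2 - b0 + min k (upperCard a1 b0 b1 d)) (min b1 (d + 2))) ∪
        Ico (max (a1 - (k - upperCard a1 b0 b1 d)) (d + 2 - a0)) a1 := fun j hj => by
  simp only [levelShadow, mem_inter, mem_upSpread, mem_twistSeg, mem_union, mem_Ico,
    level_eq_of_le h1 (show a1 + b0 ≤ d + 1 + 1 by omega)] at hj ⊢
  simp only [lowerEnd, upperStart, upperCard] at *
  omega

theorem card_levelShadow_twistSeg_le_of_le (h1 : b0 < a0) (h3 : b1 ≤ a0)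
    (h4 : b0 + b1 ≤ a0 + a1) {d : ℕ} (hd : a1 + b0 ≤ d + 1) {A : Finset ℕ}
    (hA : A ⊆ level a0 a1 b0 b1 d) :
    (levelShadow a0 a1 b0 b1 d (twistSeg a1 b0 b1 d A.card)).card ≤
      (levelShadow a0 a1 b0 b1 d A).card := by
  have hsum := card_add_card_le_card_levelShadow (b0 := b0) (b1 := b1) h1 hd A
  set A0 := A.filter (· < a1)
  set A1 := A.filter (a1 ≤ ·)
  have hsplit : A0.card + A1.card = A.card := by
    simpa only [not_lt] using card_filter_add_card_filter_not (s := A) (· < a1)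
  rw [level_eq_of_le h1 hd] at hA
  have hA0 : A0 ⊆ Ico (d + 1 - a0) a1 := fun j hj => by
    have := hA (mem_filter.1 hj).1
    simp only [A0, mem_filter, mem_union, mem_Ico] at hj this ⊢
    omega
  have hA1 : A1 ⊆ Ico (d + 1 - b0) (min b1 (d + 1)) := fun j hj => by
    have := hA (mem_filter.1 hj).1
    simp only [A1, mem_filter, mem_union, mem_Ico] at hj this ⊢
    omega
  have hn0 := card_le_card hA0
  have hn1 := card_le_card hA1
  rw [Nat.card_Ico] at hn0 hn1
  have hloss0 := card_le_card_upSpread_inter_Ico_add_one hA0 (p' := d + 2 - a0) (by omega) le_rfl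
  have hkeep0 := card_le_card_upSpread_inter_Ico hA0 (p' := d + 2 - a0) (by omega) le_rfl
  have hloss1 := card_le_card_upSpread_inter_Ico_add_one hA1 (p' := d + 2 - b0)
    (q' := min b1 (d + 2)) (by omega) (by omega)
  have hkeep1 := card_le_card_upSpread_inter_Ico hA1 (p' := d + 2 - b0)
    (q' := min b1 (d + 2)) (by omega) (by omega)
  have hseg := (card_le_card (levelShadow_twistSeg_subset_of_le (b1 := b1) h1 hd A.card)).trans
    (card_union_le _ _)
  simp only [Nat.card_Ico, upperCard, upperStart] at hseg
  -- A part of `A` loses an element only if it is full. If the lower part is full and shrinks,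
  -- `h4` makes it at least as long as the upper part, so the segment's upper part is full too.
  omega

theorem card_levelShadow_twistSeg_le (h1 : b0 < a0) (h3 : b1 ≤ a0) (h4 : b0 + b1 ≤ a0 + a1)
    (h5 : a1 + b0 ≤ b1) {d : ℕ} {A : Finset ℕ} (hA : A ⊆ level a0 a1 b0 b1 d) :
    (levelShadow a0 a1 b0 b1 d (twistSeg a1 b0 b1 d A.card)).card ≤
      (levelShadow a0 a1 b0 b1 d A).card := by
  rcases lt_or_ge (d + 1) (a1 + b0) with hd | hd
  · exact card_levelShadow_twistSeg_le_of_lt h1 h3 h5 hd hA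
  · exact card_levelShadow_twistSeg_le_of_le h1 h3 h4 hd hA

theorem isTwistInitSeg_levelShadow_twistSeg (h1 : b0 < a0) {d k : ℕ}
    (hk : k ≤ (level a0 a1 b0 b1 d).card) :
    IsTwistInitSeg a0 a1 b0 b1 (d + 1) (levelShadow a0 a1 b0 b1 d (twistSeg a1 b0 b1 d k)) := by
  have := hk.trans (card_level_le h1 d)
  refine ⟨inter_subset_right, fun j hj j' hj' hjj' => ?_⟩
  simp only [levelShadow, mem_inter, mem_upSpread, mem_twistSeg, mem_level] at hj hj' ⊢
  unfold twistLt at hjj'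
  simp only [lowerEnd, upperStart, upperCard] at *
  omega

def xdeg (x : Heart a0 a1 b0 b1) : ℕ := x.1.1.val

def ydeg (x : Heart a0 a1 b0 b1) : ℕ := x.1.2.val

theorem heartRank_eq (x : Heart a0 a1 b0 b1) : heartRank x = xdeg x + ydeg x := rfl

theorem ext_of_ydeg {x y : Heart a0 a1 b0 b1} (hr : heartRank x = heartRank y)
    (hj : ydeg x = ydeg y) : x = y := by
  rw [heartRank_eq, heartRank_eq] at hr
  exact Subtype.ext (Prod.ext (Fin.ext (by unfold xdeg at hr; omega)) (Fin.ext hj))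

theorem covBy_iff {x y : Heart a0 a1 b0 b1} : x ⋖ y ↔
    (xdeg y = xdeg x + 1 ∧ ydeg y = ydeg x) ∨ (xdeg y = xdeg x ∧ ydeg y = ydeg x + 1) := by
  let P : Fin (max a0 b0) × Fin (max a1 b1) → Prop := fun p =>
    (p.1.val < a0 ∧ p.2.val < a1) ∨ (p.1.val < b0 ∧ p.2.val < b1)
  have hconn : (Set.range (OrderEmbedding.subtype P)).OrdConnected := by
    rw [OrderEmbedding.coe_subtype, Subtype.range_coe_subtype]
    refine IsLowerSet.ordConnected fun p q hqp hp => ?_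
    have := Fin.le_def.1 hqp.1
    have := Fin.le_def.1 hqp.2
    simp only [Set.mem_ofPred_eq, P] at hp ⊢
    omega
  rw [← hconn.apply_covBy_apply_iff, OrderEmbedding.subtype_apply, OrderEmbedding.subtype_apply,
    ← Prod.mk.eta (p := x.1), ← Prod.mk.eta (p := y.1), Prod.mk_covBy_mk_iff, Fin.covBy_iff,
    Fin.covBy_iff, Nat.covBy_iff_add_one_eq, Nat.covBy_iff_add_one_eq, Fin.ext_iff, Fin.ext_iff]
  unfold xdeg ydeg
  omega

theorem heartRank_of_covBy {x y : Heart a0 a1 b0 b1} (h : x ⋖ y) :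
    heartRank y = heartRank x + 1 := by
  rw [covBy_iff] at h
  rw [heartRank_eq, heartRank_eq]
  omega

theorem ydeg_mem_level (x : Heart a0 a1 b0 b1) : ydeg x ∈ level a0 a1 b0 b1 (heartRank x) := by
  have := x.2
  rw [mem_level, heartRank_eq]
  unfold xdeg ydeg
  omega

theorem exists_of_mem_level {d j : ℕ} (hj : j ∈ level a0 a1 b0 b1 d) :
    ∃ x : Heart a0 a1 b0 b1, heartRank x = d ∧ ydeg x = j := by
  rw [mem_level] at hj
  refine ⟨⟨(⟨d - j, ?_⟩, ⟨j, ?_⟩), ?_⟩, ?_, rfl⟩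
  · omega
  · omega
  · show (d - j < a0 ∧ j < a1) ∨ (d - j < b0 ∧ j < b1)
    omega
  · rw [heartRank_eq]
    exact Nat.sub_add_cancel hj.1

section Level

variable {d : ℕ} {X : Finset (Heart a0 a1 b0 b1)}

theorem card_image_ydeg (hX : ∀ x ∈ X, heartRank x = d) : (X.image ydeg).card = X.card :=
  card_image_of_injOn fun x hx y hy h => ext_of_ydeg ((hX x hx).trans (hX y hy).symm) h

theorem image_ydeg_subset_level (hX : ∀ x ∈ X, heartRank x = d) :
    X.image ydeg ⊆ level a0 a1 b0 b1 d := by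
  intro j hj
  obtain ⟨x, hx, rfl⟩ := mem_image.1 hj
  exact hX x hx ▸ ydeg_mem_level x

theorem heartRank_of_mem_shadow (hX : ∀ x ∈ X, heartRank x = d) :
    ∀ b ∈ _root_.shadow X, heartRank b = d + 1 := fun b hb => by
  obtain ⟨a, ha, hab⟩ := mem_shadow_iff_exists_covBy.1 hb
  rw [heartRank_of_covBy hab, hX a ha]

theorem image_ydeg_shadow (hX : ∀ x ∈ X, heartRank x = d) :
    (_root_.shadow X).image ydeg = levelShadow a0 a1 b0 b1 d (X.image ydeg) := by
  ext j
  simp only [levelShadow, mem_inter, mem_upSpread, mem_image, mem_shadow_iff_exists_covBy]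
  constructor
  · rintro ⟨b, ⟨a, ha, hab⟩, rfl⟩
    refine ⟨?_, by simpa only [heartRank_of_covBy hab, hX a ha] using ydeg_mem_level b⟩
    rcases covBy_iff.1 hab with h | h
    · exact Or.inl ⟨a, ha, h.2.symm⟩
    · exact Or.inr ⟨by omega, a, ha, by omega⟩
  · rintro ⟨hj, hjl⟩
    obtain ⟨b, hb, rfl⟩ := exists_of_mem_level hjl
    refine ⟨b, ?_, rfl⟩
    obtain ⟨a, ha, hab⟩ : ∃ a ∈ X, ydeg a = ydeg b ∨ ydeg a + 1 = ydeg b := by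
      rcases hj with ⟨a, ha, h⟩ | ⟨_, a, ha, h⟩
      · exact ⟨a, ha, Or.inl h⟩
      · exact ⟨a, ha, Or.inr (by omega)⟩
    refine ⟨a, ha, covBy_iff.2 ?_⟩
    have := hX a ha
    rw [heartRank_eq] at this hb
    omega

end Level

theorem heartTwistLt_iff {x y : Heart a0 a1 b0 b1} (h : heartRank x = heartRank y) :
    heartTwistLt a1 x y ↔ twistLt a1 (ydeg x) (ydeg y) := by
  unfold heartTwistLt twistLt ydeg
  omega

theorem isInitSeg_iff_isTwistInitSeg {d : ℕ} {S : Finset (Heart a0 a1 b0 b1)}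
    (hS : ∀ x ∈ S, heartRank x = d) :
    IsInitSeg heartRank (heartTwistLt a1) d S ↔ IsTwistInitSeg a0 a1 b0 b1 d (S.image ydeg) := by
  refine ⟨fun h => ⟨image_ydeg_subset_level hS, ?_⟩, fun h => ⟨hS, fun x hx y hy hxy => ?_⟩⟩
  · intro i hi j hj hij
    obtain ⟨x, hx, rfl⟩ := mem_image.1 hi
    obtain ⟨y, hy, rfl⟩ := exists_of_mem_level hj
    exact mem_image_of_mem _ <| h.2 x hx y hy <| (heartTwistLt_iff ((hS x hx).trans hy.symm)).2 hij
  · obtain ⟨z, hz, hzy⟩ := mem_image.1 <| h.2 _ (mem_image_of_mem _ hx) _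
      (hy ▸ ydeg_mem_level y) ((heartTwistLt_iff ((hS x hx).trans hy.symm)).1 hxy)
    exact ext_of_ydeg ((hS z hz).trans hy.symm) hzy ▸ hz

theorem trichotomous_heartTwistLt :
    Std.Trichotomous (heartTwistLt (a0 := a0) (b0 := b0) (b1 := b1) a1) :=
  ⟨fun x y hxy hyx => ext_of_ydeg (by unfold heartTwistLt at hxy hyx; omega)
    (by unfold heartTwistLt at hxy hyx; unfold ydeg; omega)⟩

theorem isTrans_heartTwistLt : IsTrans (Heart a0 a1 b0 b1) (heartTwistLt a1) :=
  ⟨fun x y z hxy hyz => by unfold heartTwistLt at *; omega⟩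

theorem irrefl_heartTwistLt : Std.Irrefl (heartTwistLt (a0 := a0) (b0 := b0) (b1 := b1) a1) :=
  ⟨fun x hx => by unfold heartTwistLt at hx; omega⟩

theorem card_shadow_le_of_isInitSeg (h1 : b0 < a0) (h3 : b1 ≤ a0) (h4 : b0 + b1 ≤ a0 + a1)
    (h5 : a1 + b0 ≤ b1) {d : ℕ} {A S : Finset (Heart a0 a1 b0 b1)}
    (hA : ∀ x ∈ A, heartRank x = d) (hS : IsInitSeg heartRank (heartTwistLt a1) d S)
    (hcard : S.card = A.card) : (_root_.shadow S).card ≤ (_root_.shadow A).card := by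
  have hS' := (isInitSeg_iff_isTwistInitSeg hS.1).1 hS
  rw [← card_image_ydeg (heartRank_of_mem_shadow hS.1), ← card_image_ydeg
    (heartRank_of_mem_shadow hA), image_ydeg_shadow hS.1, image_ydeg_shadow hA,
    hS'.eq_twistSeg h1, card_image_ydeg hS.1, hcard, ← card_image_ydeg hA]
  exact card_levelShadow_twistSeg_le h1 h3 h4 h5 (image_ydeg_subset_level hA)

theorem isInitSeg_shadow (h1 : b0 < a0) {d : ℕ} {S : Finset (Heart a0 a1 b0 b1)}
    (hS : IsInitSeg heartRank (heartTwistLt a1) d S) :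
    IsInitSeg heartRank (heartTwistLt a1) (d + 1) (_root_.shadow S) := by
  have hS' := (isInitSeg_iff_isTwistInitSeg hS.1).1 hS
  rw [isInitSeg_iff_isTwistInitSeg (heartRank_of_mem_shadow hS.1), image_ydeg_shadow hS.1,
    hS'.eq_twistSeg h1]
  exact isTwistInitSeg_levelShadow_twistSeg h1 (card_le_card hS'.1)

end Heart

theorem stmt17_general (a0 a1 b0 b1 : ℕ) (h1 : b0 < a0) (h3 : b1 ≤ a0)
    (h4 : b0 + b1 ≤ a0 + a1) (h5 : a1 + b0 ≤ b1) :
    MacaulayWith (heartRank (a0 := a0) (a1 := a1) (b0 := b0) (b1 := b1))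
      (heartTwistLt a1) :=
  ⟨Heart.trichotomous_heartTwistLt, Heart.isTrans_heartTwistLt, Heart.irrefl_heartTwistLt,
    fun _ _ _ hA hS hcard => Heart.card_shadow_le_of_isInitSeg h1 h3 h4 h5 hA hS hcard,
    fun _ _ hS => Heart.isInitSeg_shadow h1 hS⟩

/-- In the case b0 < a0, a1 < b1, a0 ≥ b1, a0 + a1 ≥ b0 + b1 and a1 + b0 ≤ b1, the
heart-shaped poset is Macaulay with respect to the twist order with y > x. -/
theorem stmt17 (a0 a1 b0 b1 : ℕ) (h1 : b0 < a0) (h2 : a1 < b1) (h3 : b1 ≤ a0)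
    (h4 : b0 + b1 ≤ a0 + a1) (h5 : a1 + b0 ≤ b1) :
    MacaulayWith (heartRank (a0 := a0) (a1 := a1) (b0 := b0) (b1 := b1))
      (heartTwistLt a1) :=
  stmt17_general a0 a1 b0 b1 h1 h3 h4 h5
end
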